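/- arXiv:2404.12515 — 5 statements merged into one kernel-verified Lean document; each statement's English description precedes it below -/
import Mathlib

section
/- For every integer p ≥ 1, the spindle graph M_{3p+1} is not 3-colourable, i.e. its chromatic number is greater than 3. -/
/-- The spindle graph `M_{3p+1}` on vertices `u_0, …, u_{3p}` (elements of `ZMod (3p+1)`):
it consists of the Hamiltonian cycle `u_0 u_1 … u_{3p} u_0` together with, for each
`i ∈ {1, …, p}`, the chords `u_{3i} u_{3i+2}` and `u_{3i} u_{3i-2}` (so that
`N(u_{3i}) = {u_{3i-2}, u_{3i-1}, u_{3i+1}, u_{3i+2}}`), and the chord `u_0 u_2`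
(which is forced by the requirement
`N(u_{3i-1}) ∩ N(u_{3i-2}) = {u_{3i-3}, u_{3i}}` for `i = 1`).
In particular `M_4 ≅ K_4` and `M_7` is the (Moser) spindle of the paper. -/
def spindle (p : ℕ) : SimpleGraph (ZMod (3 * p + 1)) :=
  SimpleGraph.fromRel (fun a b =>
    b = a + 1 ∨
    (∃ i : ℕ, 1 ≤ i ∧ i ≤ p ∧ a = ((3 * i : ℕ) : ZMod (3 * p + 1)) ∧
      (b = a + 2 ∨ b = a - 2)) ∨
    (a = 0 ∧ b = 2))

/-! In a proper 3-colouring, two triangles sharing an edge force their two apex vertices to have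
the same colour. For each `i < p` the vertices `u_{3i}, u_{3i+1}, u_{3i+2}, u_{3i+3}` form such a
pair of triangles, so inductively every `u_{3i}` gets the colour of `u_0`; but `u_{3p}` and `u_0`
are adjacent on the cycle. -/

theorem Fin.eq_of_ne_of_ne_three {a b c d : Fin 3} (hab : a ≠ b) (hac : a ≠ c) (hbc : b ≠ c)
    (hbd : b ≠ d) (hcd : c ≠ d) : d = a := by
  omega

theorem SimpleGraph.Coloring.eq_of_adj_of_adj_of_adj {V : Type*} {G : SimpleGraph V}
    (C : G.Coloring (Fin 3)) {a b c d : V} (hab : G.Adj a b) (hac : G.Adj a c) (hbc : G.Adj b c)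
    (hbd : G.Adj b d) (hcd : G.Adj c d) : C d = C a :=
  Fin.eq_of_ne_of_ne_three (C.valid hab) (C.valid hac) (C.valid hbc) (C.valid hbd) (C.valid hcd)

theorem ZMod.natCast_ne_zero_of_lt {n k : ℕ} (hk : 0 < k) (hkn : k < n) : (k : ZMod n) ≠ 0 := by
  rw [Ne, ZMod.natCast_eq_zero_iff]
  exact Nat.not_dvd_of_pos_of_lt hk hkn

section Spindle

variable {p : ℕ}

theorem spindle_adj_add_one (hp : 1 ≤ p) (x : ZMod (3 * p + 1)) : (spindle p).Adj x (x + 1) := by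
  have h1 : (1 : ZMod (3 * p + 1)) ≠ 0 := by
    exact_mod_cast ZMod.natCast_ne_zero_of_lt (n := 3 * p + 1) one_pos (by omega)
  rw [spindle, SimpleGraph.fromRel_adj]
  exact ⟨left_ne_add.mpr h1, Or.inl (Or.inl rfl)⟩

theorem spindle_adj_add_two (hp : 1 ≤ p) {i : ℕ} (hi : i ≤ p) :
    (spindle p).Adj ((3 * i : ℕ) : ZMod (3 * p + 1)) ((3 * i : ℕ) + 2) := by
  have h2 : (2 : ZMod (3 * p + 1)) ≠ 0 := by
    exact_mod_cast ZMod.natCast_ne_zero_of_lt (n := 3 * p + 1) two_pos (by omega)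
  rw [spindle, SimpleGraph.fromRel_adj]
  refine ⟨left_ne_add.mpr h2, Or.inl (Or.inr ?_)⟩
  rcases Nat.eq_zero_or_pos i with rfl | hi0
  · right; simp
  · left; exact ⟨i, hi0, hi, rfl, Or.inl rfl⟩

theorem spindle_adj_sub_two {i : ℕ} (hi0 : 1 ≤ i) (hi : i ≤ p) :
    (spindle p).Adj ((3 * i : ℕ) : ZMod (3 * p + 1)) ((3 * i : ℕ) - 2) := by
  have h2 : (2 : ZMod (3 * p + 1)) ≠ 0 := by
    exact_mod_cast ZMod.natCast_ne_zero_of_lt (n := 3 * p + 1) two_pos (by omega)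
  rw [spindle, SimpleGraph.fromRel_adj]
  exact ⟨fun h => h2 (sub_eq_self.mp h.symm),
    Or.inl (Or.inr (Or.inl ⟨i, hi0, hi, rfl, Or.inr rfl⟩))⟩

theorem spindle_coloring_natCast_mul_three (hp : 1 ≤ p) (C : (spindle p).Coloring (Fin 3))
    {i : ℕ} (hi : i ≤ p) : C ((3 * i : ℕ) : ZMod (3 * p + 1)) = C 0 := by
  induction i with
  | zero => simp
  | succ i ih =>
    set x : ZMod (3 * p + 1) := ((3 * i : ℕ) : ZMod (3 * p + 1))
    have hsucc : ((3 * (i + 1) : ℕ) : ZMod (3 * p + 1)) = x + 1 + 2 := by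
      simp only [x]; push_cast; ring
    have hab := spindle_adj_add_one hp x
    have hac := spindle_adj_add_two hp (i := i) (by omega)
    have hbc : (spindle p).Adj (x + 1) (x + 2) := by
      simpa only [add_assoc, one_add_one_eq_two] using spindle_adj_add_one hp (x + 1)
    have hbd : (spindle p).Adj (x + 1) (x + 1 + 2) := by
      have h := spindle_adj_sub_two (i := i + 1) (by omega) hi
      rw [hsucc, add_sub_cancel_right] at h
      exact h.symm
    have hcd : (spindle p).Adj (x + 2) (x + 1 + 2) := by
      simpa only [add_right_comm] using spindle_adj_add_one hp (x + 2)
    rw [hsucc, C.eq_of_adj_of_adj_of_adj hab hac hbc hbd hcd, ih (by omega)]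

end Spindle

/-- For every integer `p ≥ 1`, the spindle graph `M_{3p+1}` is not 3-colourable. -/
theorem spindle_not_three_colourable (p : ℕ) (hp : 1 ≤ p) :
    ¬ (spindle p).Colorable 3 := by
  rintro ⟨C⟩
  have hwrap : ((3 * p : ℕ) : ZMod (3 * p + 1)) + 1 = 0 := by
    exact_mod_cast ZMod.natCast_self (3 * p + 1)
  exact C.valid (hwrap ▸ spindle_adj_add_one hp _) (spindle_coloring_natCast_mul_three hp C le_rfl)
end

section
/- Let G be a connected (bull, E)-free graph that contains no odd wheel as an induced subgraph, and let Q be a smallest induced odd cycle in G of length p ≥ 5. Then Q is a dominating set in G, i.e. every vertex of G either lies on Q or has a neighbour on Q. -/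
/-- `H` is contained in `G` as an induced subgraph. -/
def ContainsInduced {α β : Type*} (H : SimpleGraph α) (G : SimpleGraph β) : Prop :=
  ∃ f : α ↪ β, ∀ a b, G.Adj (f a) (f b) ↔ H.Adj a b

/-- The bull: a triangle `v2 v3 v4` with pendant edges `v1 v2` and `v4 v5`. -/
def bull : SimpleGraph (Fin 5) :=
  SimpleGraph.fromRel (fun a b =>
    ((a : ℕ), (b : ℕ)) ∈ [(0, 1), (1, 2), (2, 3), (3, 4), (1, 3)])

/-- The graph `E = S_{1,2,2}`: centre `0`, leaf `1`, and the paths `0 2 3` and `0 4 5`. -/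
def graphE : SimpleGraph (Fin 6) :=
  SimpleGraph.fromRel (fun a b =>
    ((a : ℕ), (b : ℕ)) ∈ [(0, 1), (0, 2), (2, 3), (0, 4), (4, 5)])

/-- The odd wheel `W_n` (for odd `n ≥ 3`): a cycle of length `n` plus a hub adjacent to
all cycle vertices. -/
def wheel (n : ℕ) : SimpleGraph (Option (ZMod n)) :=
  SimpleGraph.fromRel (fun a b =>
    (a = none ∧ b ≠ none) ∨ (∃ x : ZMod n, a = some x ∧ b = some (x + 1)))

/-- `u : ZMod k → V` lists the vertices (in cyclic order) of an induced cycle of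
length `k` in `G`. -/
def IsInducedCycle {V : Type*} (G : SimpleGraph V) {k : ℕ} (u : ZMod k → V) : Prop :=
  Function.Injective u ∧ ∀ i j : ZMod k, G.Adj (u i) (u j) ↔ (j = i + 1 ∨ i = j + 1)

/-- `v : ZMod p → V` is a smallest induced odd cycle of `G` of length `p ≥ 5`:
an induced odd cycle of length `p ≥ 5` such that `G` has no induced odd cycle of
length `k` with `5 ≤ k < p`. -/
def IsSmallestInducedOddCycle {V : Type*} (G : SimpleGraph V) {p : ℕ}
    (v : ZMod p → V) : Prop :=
  5 ≤ p ∧ Odd p ∧ IsInducedCycle G v ∧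
    ∀ k : ℕ, 5 ≤ k → k < p → Odd k → ∀ u : ZMod k → V, ¬ IsInducedCycle G u

lemma containsInduced_mk {α V : Type*} [LinearOrder α] (H : SimpleGraph α) (G : SimpleGraph V)
    (u : α → V) (hinj : Function.Injective u)
    (h : ∀ a b, a < b → (G.Adj (u a) (u b) ↔ H.Adj a b)) : ContainsInduced H G := by
  refine ⟨⟨u, hinj⟩, fun a b => ?_⟩
  rcases lt_trichotomy a b with hab | rfl | hab
  · exact h a b hab
  · simp
  · rw [G.adj_comm, H.adj_comm]; exact h b a hab

lemma bull_mk {V : Type*} (G : SimpleGraph V) (A B C D E : V)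
    (hAB : G.Adj A B) (hBC : G.Adj B C) (hCD : G.Adj C D) (hDE : G.Adj D E)
    (hBD : G.Adj B D)
    (nAC : ¬ G.Adj A C) (nAD : ¬ G.Adj A D) (nAE : ¬ G.Adj A E)
    (nBE : ¬ G.Adj B E) (nCE : ¬ G.Adj C E)
    (dAC : A ≠ C) (dAD : A ≠ D) (dAE : A ≠ E) (dBE : B ≠ E) (dCE : C ≠ E) :
    ContainsInduced bull G := by
  have dAB := hAB.ne; have dBC := hBC.ne; have dCD := hCD.ne
  have dDE := hDE.ne; have dBD := hBD.ne
  apply containsInduced_mk bull G ![A, B, C, D, E]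
  · intro a b hab
    fin_cases a <;> fin_cases b <;>
      simp only [Matrix.cons_val_zero, Matrix.cons_val_one, Matrix.head_cons,
        Matrix.cons_val_two, Matrix.tail_cons, Matrix.cons_val_three,
        Matrix.cons_val_four, Matrix.cons_val_succ, Matrix.head_fin_const] at hab <;>
      first
        | rfl
        | exact absurd hab (by assumption)
        | exact absurd hab.symm (by assumption)
  · intro a b hab
    fin_cases a <;> fin_cases b <;>
      simp only [Matrix.cons_val_zero, Matrix.cons_val_one, Matrix.head_cons,
        Matrix.cons_val_two, Matrix.tail_cons, Matrix.cons_val_three,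
        Matrix.cons_val_four, Matrix.cons_val_succ, Matrix.head_fin_const] <;>
      rw [bull, SimpleGraph.fromRel_adj] <;>
      first
        | exact absurd hab (by decide)
        | (refine iff_of_true ?_ (by decide); assumption)
        | (refine iff_of_false ?_ (by decide); assumption)

lemma graphE_mk {V : Type*} (G : SimpleGraph V) (A B C D E F : V)
    (hAB : G.Adj A B) (hAC : G.Adj A C) (hAE : G.Adj A E) (hCD : G.Adj C D)
    (hEF : G.Adj E F)
    (nAD : ¬ G.Adj A D) (nAF : ¬ G.Adj A F) (nBC : ¬ G.Adj B C) (nBD : ¬ G.Adj B D)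
    (nBE : ¬ G.Adj B E) (nBF : ¬ G.Adj B F) (nCE : ¬ G.Adj C E) (nCF : ¬ G.Adj C F)
    (nDE : ¬ G.Adj D E) (nDF : ¬ G.Adj D F)
    (dAD : A ≠ D) (dAF : A ≠ F) (dBC : B ≠ C) (dBD : B ≠ D) (dBE : B ≠ E)
    (dBF : B ≠ F) (dCE : C ≠ E) (dCF : C ≠ F) (dDE : D ≠ E) (dDF : D ≠ F) :
    ContainsInduced graphE G := by
  have dAB := hAB.ne; have dAC := hAC.ne; have dAE := hAE.ne
  have dCD := hCD.ne; have dEF := hEF.ne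
  apply containsInduced_mk graphE G ![A, B, C, D, E, F]
  · intro a b hab
    fin_cases a <;> fin_cases b <;>
      simp only [Matrix.cons_val_zero, Matrix.cons_val_one, Matrix.head_cons,
        Matrix.cons_val_two, Matrix.tail_cons, Matrix.cons_val_three,
        Matrix.cons_val_four, Matrix.cons_val_succ, Matrix.head_fin_const] at hab <;>
      first
        | rfl
        | exact absurd hab (by assumption)
        | exact absurd hab.symm (by assumption)
  · intro a b hab
    fin_cases a <;> fin_cases b <;>
      simp only [Matrix.cons_val_zero, Matrix.cons_val_one, Matrix.head_cons,
        Matrix.cons_val_two, Matrix.tail_cons, Matrix.cons_val_three,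
        Matrix.cons_val_four, Matrix.cons_val_succ, Matrix.head_fin_const] <;>
      rw [graphE, SimpleGraph.fromRel_adj] <;>
      first
        | exact absurd hab (by decide)
        | (refine iff_of_true ?_ (by decide); assumption)
        | (refine iff_of_false ?_ (by decide); assumption)

lemma wheel_mk {V : Type*} {p : ℕ} (G : SimpleGraph V) (v : ZMod p → V)
    (hinj : Function.Injective v)
    (hadj : ∀ i j : ZMod p, G.Adj (v i) (v j) ↔ (j = i + 1 ∨ i = j + 1))
    (hone : (1 : ZMod p) ≠ 0)
    (x : V) (hx : x ∉ Set.range v) (hall : ∀ i, G.Adj x (v i)) :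
    ContainsInduced (wheel p) G := by
  have hinj' : Function.Injective (fun o : Option (ZMod p) => o.elim x v) := by
    rintro (_ | a) (_ | b) h <;>
      simp only [Function.Embedding.coeFn_mk, Option.elim_none, Option.elim_some] at h
    · rfl
    · exact absurd ⟨b, h.symm⟩ hx
    · exact absurd ⟨a, h⟩ hx
    · exact congrArg some (hinj h)
  refine ⟨⟨fun o => o.elim x v, hinj'⟩, ?_⟩
  · rintro (_ | a) (_ | b) <;>
      simp only [Function.Embedding.coeFn_mk, Option.elim_none, Option.elim_some]
    · exact iff_of_false (G.irrefl) (fun h => (wheel p).ne_of_adj h rfl)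
    · refine iff_of_true (hall b) ?_
      rw [wheel, SimpleGraph.fromRel_adj]
      exact ⟨by simp, Or.inl (Or.inl ⟨rfl, by simp⟩)⟩
    · refine iff_of_true (hall a).symm ?_
      rw [wheel, SimpleGraph.fromRel_adj]
      exact ⟨by simp, Or.inr (Or.inl ⟨rfl, by simp⟩)⟩
    · rw [hadj, wheel, SimpleGraph.fromRel_adj]
      simp only [Option.some.injEq, reduceCtorEq, false_and, ne_eq, false_or,
        exists_eq_left']
      constructor
      · intro h
        refine ⟨fun he => ?_, ?_⟩
        · subst he
          rcases h with h | h <;> exact hone (by linear_combination -h)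
        · rcases h with h | h
          · exact Or.inl h
          · exact Or.inr h
      · rintro ⟨hne, h | h⟩
        · exact Or.inl h
        · exact Or.inr h

/-- If `G` is a connected `(bull, E)`-free graph with no induced odd wheel and `Q` is a
smallest induced odd cycle of `G` of length `p ≥ 5`, then `Q` is a dominating set:
every vertex of `G` lies on `Q` or has a neighbour on `Q`. -/
theorem smallest_odd_cycle_dominating {V : Type*} [Fintype V] (G : SimpleGraph V)
    (hconn : G.Connected)
    (hbull : ¬ ContainsInduced bull G) (hE : ¬ ContainsInduced graphE G)
    (hwheel : ∀ t : ℕ, 1 ≤ t → ¬ ContainsInduced (wheel (2 * t + 1)) G)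
    {p : ℕ} (v : ZMod p → V) (hQ : IsSmallestInducedOddCycle G v) :
    ∀ w : V, w ∉ Set.range v → ∃ i : ZMod p, G.Adj w (v i) := by
  classical
  obtain ⟨hp5, hpodd, ⟨hinj, hadj⟩, -⟩ := hQ
  haveI : NeZero p := ⟨by omega⟩
  by_contra hcon
  push_neg at hcon
  obtain ⟨w₀, hw₀r, hw₀adj⟩ := hcon
  -- basic cast facts
  have hcast : ∀ a b : ℕ, a < p → b < p → a ≠ b → (a : ZMod p) ≠ (b : ZMod p) := by
    intro a b ha hb hne he
    have := congrArg ZMod.val he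
    rw [ZMod.val_natCast_of_lt ha, ZMod.val_natCast_of_lt hb] at this
    exact hne this
  have n01 : (0 : ZMod p) ≠ 1 := by
    have := hcast 0 1 (by omega) (by omega) (by omega); push_cast at this; exact this
  have n02 : (0 : ZMod p) ≠ 2 := by
    have := hcast 0 2 (by omega) (by omega) (by omega); push_cast at this; exact this
  have n03 : (0 : ZMod p) ≠ 3 := by
    have := hcast 0 3 (by omega) (by omega) (by omega); push_cast at this; exact this
  have n04 : (0 : ZMod p) ≠ 4 := by
    have := hcast 0 4 (by omega) (by omega) (by omega); push_cast at this; exact this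
  have n12 : (1 : ZMod p) ≠ 2 := by
    have := hcast 1 2 (by omega) (by omega) (by omega); push_cast at this; exact this
  have n13 : (1 : ZMod p) ≠ 3 := by
    have := hcast 1 3 (by omega) (by omega) (by omega); push_cast at this; exact this
  have n14 : (1 : ZMod p) ≠ 4 := by
    have := hcast 1 4 (by omega) (by omega) (by omega); push_cast at this; exact this
  have n23 : (2 : ZMod p) ≠ 3 := by
    have := hcast 2 3 (by omega) (by omega) (by omega); push_cast at this; exact this
  have n24 : (2 : ZMod p) ≠ 4 := by
    have := hcast 2 4 (by omega) (by omega) (by omega); push_cast at this; exact this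
  have n34 : (3 : ZMod p) ≠ 4 := by
    have := hcast 3 4 (by omega) (by omega) (by omega); push_cast at this; exact this
  -- find w with no neighbour on the cycle, closest to the cycle, and its neighbour x
  let f : V → ℕ := fun u =>
    Finset.univ.inf' Finset.univ_nonempty (fun i : ZMod p => G.dist u (v i))
  have hf_le : ∀ (u : V) (i : ZMod p), f u ≤ G.dist u (v i) :=
    fun u i => Finset.inf'_le _ (Finset.mem_univ i)
  have hf_ex : ∀ u : V, ∃ i, f u = G.dist u (v i) := by
    intro u
    obtain ⟨i, _, hi⟩ :=
      Finset.exists_mem_eq_inf' (Finset.univ_nonempty) (fun i : ZMod p => G.dist u (v i))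
    exact ⟨i, hi⟩
  set S : Finset V :=
    Finset.univ.filter (fun u => u ∉ Set.range v ∧ ∀ i, ¬ G.Adj u (v i)) with hSdef
  have hSne : S.Nonempty :=
    ⟨w₀, by
      rw [hSdef, Finset.mem_filter]
      exact ⟨Finset.mem_univ w₀, hw₀r, hw₀adj⟩⟩
  obtain ⟨w, hwS, hwmin⟩ := S.exists_min_image f hSne
  rw [hSdef, Finset.mem_filter] at hwS
  obtain ⟨-, hwr, hwadj⟩ := hwS
  have hfw2 : 2 ≤ f w := by
    by_contra hlt
    obtain ⟨i, hi⟩ := hf_ex w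
    have h01 : f w = 0 ∨ f w = 1 := by omega
    rcases h01 with h | h
    · rw [h] at hi
      exact hwr ⟨i, ((hconn.dist_eq_zero_iff).mp hi.symm).symm⟩
    · rw [h] at hi
      have hd : G.dist w (v i) ≠ 0 := by omega
      obtain ⟨q, hq⟩ := SimpleGraph.exists_walk_of_dist_ne_zero hd
      rw [← hi] at hq
      cases q with
      | nil => simp at hq
      | @cons _ y _ hwy q' =>
        rw [SimpleGraph.Walk.length_cons] at hq
        have : q'.length = 0 := by omega
        have hy := SimpleGraph.Walk.eq_of_length_eq_zero this
        exact hwadj i (hy ▸ hwy)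
  obtain ⟨i₀, hi₀⟩ := hf_ex w
  obtain ⟨q, hq⟩ := (hconn w (v i₀)).exists_walk_length_eq_dist
  cases q with
  | nil =>
    rw [SimpleGraph.Walk.length_nil] at hq
    omega
  | @cons _ x _ hwx q' =>
    rw [SimpleGraph.Walk.length_cons] at hq
    have hdx : G.dist x (v i₀) ≤ q'.length := SimpleGraph.dist_le q'
    have hfx_lt : f x < f w := by
      have := hf_le x i₀
      omega
    have hle : f w ≤ 1 + f x := by
      obtain ⟨j, hj⟩ := hf_ex x
      have h1 : G.dist w x ≤ 1 := by
        have := SimpleGraph.dist_le hwx.toWalk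
        simpa using this
      have h2 : G.dist w (v j) ≤ G.dist w x + G.dist x (v j) := hconn.dist_triangle
      have h3 := hf_le w j
      omega
    have hxr : x ∉ Set.range v := by
      rintro ⟨j, rfl⟩
      have : f (v j) ≤ 0 := by
        have := hf_le (v j) j
        simpa [SimpleGraph.dist_self] using this
      omega
    have hxadj : ∃ j, G.Adj x (v j) := by
      by_contra hno
      push_neg at hno
      have hxS : x ∈ S := by
        rw [hSdef, Finset.mem_filter]
        exact ⟨Finset.mem_univ x, hxr, hno⟩
      have := hwmin x hxS
      omega
    obtain ⟨j₀, hj₀⟩ := hxadj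
    clear hfx_lt hle hdx hq hi₀ hfw2 hwmin hSne
    -- adjacency helpers on the cycle
    have hvadj1 : ∀ i : ZMod p, G.Adj (v i) (v (i + 1)) :=
      fun i => (hadj i (i + 1)).mpr (Or.inl rfl)
    have hnadj' : ∀ i j : ZMod p, j ≠ i + 1 → i ≠ j + 1 → ¬ G.Adj (v i) (v j) :=
      fun i j h1 h2 h => ((hadj i j).mp h).elim h1 h2
    -- the bull step
    have hbull1 : ∀ i : ZMod p, G.Adj x (v (i + 1)) → G.Adj x (v (i + 2)) →
        G.Adj x (v (i + 3)) := by
      intro i h1 h2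
      by_contra h3
      apply hbull
      refine bull_mk G (v (i + 3)) (v (i + 2)) (v (i + 1)) x w
        (hAB := ?_) (hBC := ?_) (hCD := h1.symm) (hDE := hwx.symm) (hBD := h2.symm)
        (nAC := ?_) (nAD := fun h => h3 h.symm) (nAE := fun h => hwadj _ h.symm)
        (nBE := fun h => hwadj _ h.symm) (nCE := fun h => hwadj _ h.symm)
        (dAC := fun h => n13.symm (by linear_combination hinj h))
        (dAD := fun h => hxr ⟨_, h⟩) (dAE := fun h => hwr ⟨_, h⟩)
        (dBE := fun h => hwr ⟨_, h⟩) (dCE := fun h => hwr ⟨_, h⟩)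
      · have := (hvadj1 (i + 2)).symm
        rwa [show i + 2 + 1 = i + 3 from by ring] at this
      · have := (hvadj1 (i + 1)).symm
        rwa [show i + 1 + 1 = i + 2 from by ring] at this
      · exact hnadj' _ _ (fun h => n14 (by linear_combination h))
          (fun h => n23.symm (by linear_combination h))
    -- the E step
    have hE1 : ∀ i : ZMod p, G.Adj x (v (i + 1)) → ¬ G.Adj x (v i) →
        ¬ G.Adj x (v (i + 2)) → ¬ G.Adj x (v (i + 3)) → False := by
      intro i h1 h0 h2 h3
      apply hE
      refine graphE_mk G (v (i + 1)) (v i) x w (v (i + 2)) (v (i + 3))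
        (hAB := (hvadj1 i).symm) (hAC := h1.symm) (hAE := ?_) (hCD := hwx.symm) (hEF := ?_)
        (nAD := fun h => hwadj _ h.symm) (nAF := ?_) (nBC := fun h => h0 h.symm)
        (nBD := fun h => hwadj _ h.symm) (nBE := ?_) (nBF := ?_) (nCE := h2) (nCF := h3)
        (nDE := hwadj _) (nDF := hwadj _)
        (dAD := fun h => hwr ⟨_, h⟩)
        (dAF := fun h => n13 (by linear_combination hinj h))
        (dBC := fun h => hxr ⟨_, h⟩) (dBD := fun h => hwr ⟨_, h⟩)
        (dBE := fun h => n02 (by linear_combination hinj h))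
        (dBF := fun h => n03 (by linear_combination hinj h))
        (dCE := fun h => hxr ⟨_, h.symm⟩) (dCF := fun h => hxr ⟨_, h.symm⟩)
        (dDE := fun h => hwr ⟨_, h.symm⟩) (dDF := fun h => hwr ⟨_, h.symm⟩)
      · have := hvadj1 (i + 1)
        rwa [show i + 1 + 1 = i + 2 from by ring] at this
      · have := hvadj1 (i + 2)
        rwa [show i + 2 + 1 = i + 3 from by ring] at this
      · exact hnadj' _ _ (fun h => n23.symm (by linear_combination h))
          (fun h => n14 (by linear_combination h))
      · exact hnadj' _ _ (fun h => n12.symm (by linear_combination h))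
          (fun h => n03 (by linear_combination h))
      · exact hnadj' _ _ (fun h => n13.symm (by linear_combination h))
          (fun h => n04 (by linear_combination h))
    -- propagation
    have hstep : ∀ i : ZMod p, G.Adj x (v (i + 1)) → G.Adj x (v (i + 3)) := by
      intro i h1
      by_cases h2 : G.Adj x (v (i + 2))
      · exact hbull1 i h1 h2
      · by_cases h0 : G.Adj x (v i)
        · exfalso
          have hb := hbull1 (i - 1)
          rw [show i - 1 + 1 = i from by ring, show i - 1 + 2 = i + 1 from by ring,
            show i - 1 + 3 = i + 2 from by ring] at hb
          exact h2 (hb h0 h1)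
        · by_contra h3
          exact hE1 i h1 h0 h2 h3
    have hsucc : ∀ m : ZMod p, G.Adj x (v m) → G.Adj x (v (m + 2)) := by
      intro m hm
      have h1 : G.Adj x (v ((m - 1) + 1)) := by
        rwa [show m - 1 + 1 = m from by ring]
      have := hstep (m - 1) h1
      rwa [show m - 1 + 3 = m + 2 from by ring] at this
    have hiter : ∀ k : ℕ, G.Adj x (v (j₀ + 2 * (k : ZMod p))) := by
      intro k
      induction k with
      | zero => simpa using hj₀
      | succ k ih =>
        have := hsucc _ ih
        rwa [show j₀ + 2 * ((k : ZMod p)) + 2 = j₀ + 2 * (((k + 1 : ℕ) : ZMod p))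
          from by push_cast; ring] at this
    obtain ⟨t, hpt⟩ := hpodd
    have hall : ∀ n : ZMod p, G.Adj x (v n) := by
      intro n
      have hp0 : ((2 * t + 1 : ℕ) : ZMod p) = 0 := by
        rw [← hpt]; exact ZMod.natCast_self p
      have h2t : 2 * ((t : ZMod p)) + 1 = 0 := by
        push_cast at hp0; linear_combination hp0
      have := hiter ((n - j₀).val * (t + 1))
      rwa [show j₀ + 2 * ((((n - j₀).val * (t + 1) : ℕ)) : ZMod p) = n from ?_] at this
      push_cast
      rw [ZMod.natCast_val, ZMod.cast_id]
      linear_combination (n - j₀) * h2t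
    have hcont : ContainsInduced (wheel p) G :=
      wheel_mk G v hinj hadj (fun h => n01 h.symm) x hxr hall
    have hpt' : p = 2 * t + 1 := by omega
    exact hwheel t (by omega) (hpt' ▸ hcont)
end

section
/- Let G be a bull-free graph that contains no odd wheel as an induced subgraph, let Q = v_1 v_2 ... v_p v_1 be a smallest induced odd cycle in G of length p ≥ 5, and let w ∈ V(G)∖V(Q) be a vertex with at least one neighbour on Q. If p > 5, then q(w) ∈ {1, 3}; if p = 5, then q(w) ∈ {1, 3, 4}. -/
/-- `w` has `i` consecutive neighbours on the cycle `v : ZMod p → V`: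
there is an index `j` with `{v_j, v_{j+1}, …, v_{j+i-1}} ⊆ N(w)`. -/
def HasConsecutiveNbrs {V : Type*} (G : SimpleGraph V) {p : ℕ} (v : ZMod p → V)
    (w : V) (i : ℕ) : Prop :=
  ∃ j : ZMod p, ∀ k : ℕ, k < i → G.Adj w (v (j + (k : ZMod p)))

/-- `qval G v w` is `q(w)`: the largest `i` such that `w` has `i` consecutive
neighbours on the cycle `v : ZMod p → V` (necessarily `i ≤ p`). -/
noncomputable def qval {V : Type*} (G : SimpleGraph V) {p : ℕ} (v : ZMod p → V)
    (w : V) : ℕ :=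
  sSup {i : ℕ | i ≤ p ∧ HasConsecutiveNbrs G v w i}

set_option linter.unusedTactic false in
set_option linter.unreachableTactic false in
lemma bull_embed {V : Type*} (G : SimpleGraph V) (a b c d e : V)
    (h01 : G.Adj a b) (h12 : G.Adj b c) (h23 : G.Adj c d) (h34 : G.Adj d e)
    (h13 : G.Adj b d)
    (n02 : ¬ G.Adj a c) (n03 : ¬ G.Adj a d) (n04 : ¬ G.Adj a e)
    (n14 : ¬ G.Adj b e) (n24 : ¬ G.Adj c e)
    (hac : a ≠ c) (had : a ≠ d) (hae : a ≠ e) (hbe : b ≠ e) (hce : c ≠ e) :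
    ContainsInduced bull G := by
  have hab := h01.ne
  have hbc := h12.ne
  have hcd := h23.ne
  have hde := h34.ne
  have hbd := h13.ne
  have h10 := h01.symm
  have h21 := h12.symm
  have h32 := h23.symm
  have h43 := h34.symm
  have h31 := h13.symm
  have n20 : ¬ G.Adj c a := fun h => n02 h.symm
  have n30 : ¬ G.Adj d a := fun h => n03 h.symm
  have n40 : ¬ G.Adj e a := fun h => n04 h.symm
  have n41 : ¬ G.Adj e b := fun h => n14 h.symm
  have n42 : ¬ G.Adj e c := fun h => n24 h.symm
  refine ⟨⟨![a, b, c, d, e], ?_⟩, ?_⟩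
  · intro x y h
    fin_cases x <;> fin_cases y <;> simp_all
  · intro x y
    show G.Adj (![a, b, c, d, e] x) (![a, b, c, d, e] y) ↔ bull.Adj x y
    fin_cases x <;> fin_cases y <;>
      simp_all [bull, SimpleGraph.irrefl] <;> decide

lemma wheel_embed {V : Type*} (G : SimpleGraph V) {p : ℕ} (hp : 5 ≤ p)
    (v : ZMod p → V) (hinj : Function.Injective v)
    (hcyc : ∀ i j, G.Adj (v i) (v j) ↔ (j = i + 1 ∨ i = j + 1))
    (w : V) (hw : w ∉ Set.range v) (hall : ∀ i, G.Adj w (v i)) :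
    ContainsInduced (wheel p) G := by
  haveI : NeZero p := ⟨by omega⟩
  have h1 : (1 : ZMod p) ≠ 0 := by
    intro h
    have hd := (ZMod.natCast_eq_zero_iff 1 p).1 (by exact_mod_cast h)
    have := Nat.le_of_dvd one_pos hd
    omega
  have hne1 : ∀ x : ZMod p, x + 1 ≠ x := fun x h => h1 (by linear_combination h)
  refine ⟨⟨fun o => o.elim w v, ?_⟩, ?_⟩
  · intro x y h
    match x, y with
    | none, none => rfl
    | none, some b => exact absurd ⟨b, h.symm⟩ hw
    | some a, none => exact absurd ⟨a, h⟩ hw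
    | some a, some b => exact congrArg _ (hinj h)
  · intro x y
    match x, y with
    | none, none => simp [wheel]
    | none, some b =>
      show G.Adj w (v b) ↔ _
      simp [wheel, hall b]
    | some a, none =>
      show G.Adj (v a) w ↔ _
      simp [wheel, (hall a).symm]
    | some a, some b =>
      show G.Adj (v a) (v b) ↔ _
      simp only [wheel, SimpleGraph.fromRel_adj, Option.some.injEq, ne_eq, reduceCtorEq,
        false_and, and_false, false_or, or_false, not_false_eq_true, and_true, true_and,
        exists_eq_left']
      rw [hcyc]
      constructor
      · rintro (h | h)
        · exact ⟨fun he => hne1 a (by rw [← h, ← he]), Or.inl h⟩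
        · exact ⟨fun he => hne1 b (by rw [← h, he]), Or.inr h⟩
      · rintro ⟨hne, (h | h)⟩
        · exact Or.inl h
        · exact Or.inr h


/-- Let `G` be a bull-free graph with no induced odd wheel, let `Q` be a smallest
induced odd cycle of `G` of length `p ≥ 5`, and let `w ∉ Q` have a neighbour on `Q`.
If `p > 5` then `q(w) ∈ {1, 3}`, and if `p = 5` then `q(w) ∈ {1, 3, 4}`. -/
theorem qval_mem {V : Type*} [Fintype V] (G : SimpleGraph V)
    (hbull : ¬ ContainsInduced bull G)
    (hwheel : ∀ t : ℕ, 1 ≤ t → ¬ ContainsInduced (wheel (2 * t + 1)) G)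
    {p : ℕ} (v : ZMod p → V) (hQ : IsSmallestInducedOddCycle G v)
    (w : V) (hw : w ∉ Set.range v) (hnbr : ∃ i : ZMod p, G.Adj w (v i)) :
    (5 < p → qval G v w ∈ ({1, 3} : Set ℕ)) ∧
    (p = 5 → qval G v w ∈ ({1, 3, 4} : Set ℕ)) := by
  obtain ⟨hp5, hodd, ⟨hinj, hcyc⟩, -⟩ := hQ
  haveI : NeZero p := ⟨by omega⟩
  have hz : ∀ n : ℕ, 0 < n → n < p → (n : ZMod p) ≠ 0 := by
    intro n hn hnp h
    rw [ZMod.natCast_eq_zero_iff] at h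
    have := Nat.le_of_dvd hn h
    omega
  have idx : ∀ (a b : ZMod p) (n : ℕ), 0 < n → n < p → a - b = (n : ZMod p) → a ≠ b := by
    intro a b n hn hnp hab h
    exact hz n hn hnp (by rw [← hab, h, sub_self])
  have vne : ∀ (a b : ZMod p) (n : ℕ), 0 < n → n < p → b - a = (n : ZMod p) → v a ≠ v b :=
    fun a b n h1 h2 h3 h => idx b a n h1 h2 h3 (hinj h).symm
  have nadj : ∀ a b : ZMod p, b ≠ a + 1 → a ≠ b + 1 → ¬ G.Adj (v a) (v b) := by
    intro a b h1 h2 h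
    rcases (hcyc a b).1 h with h' | h'
    · exact h1 h'
    · exact h2 h'
  have hwv : ∀ x : ZMod p, w ≠ v x := fun x h => hw ⟨x, h.symm⟩
  have h1S : (1 : ℕ) ∈ {i : ℕ | i ≤ p ∧ HasConsecutiveNbrs G v w i} := by
    obtain ⟨i, hi⟩ := hnbr
    refine ⟨by omega, i, fun k hk => ?_⟩
    interval_cases k
    simpa using hi
  have hbdd : BddAbove {i : ℕ | i ≤ p ∧ HasConsecutiveNbrs G v w i} := ⟨p, fun x hx => hx.1⟩
  have hqS : qval G v w ∈ {i : ℕ | i ≤ p ∧ HasConsecutiveNbrs G v w i} :=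
    Nat.sSup_mem ⟨1, h1S⟩ hbdd
  have hq1 : 1 ≤ qval G v w := le_csSup hbdd h1S
  have hqp : qval G v w ≤ p := hqS.1
  obtain ⟨j, hj⟩ := hqS.2
  -- `q ≠ p`, else `Q + w` is an induced odd wheel
  have hqnep : qval G v w ≠ p := by
    intro hqep
    have hall : ∀ i : ZMod p, G.Adj w (v i) := by
      intro i
      have hlt : (i - j).val < qval G v w := by
        rw [hqep]; exact ZMod.val_lt _
      have := hj (i - j).val hlt
      rwa [ZMod.natCast_rightInverse _, add_sub_cancel] at this
    obtain ⟨t, ht⟩ := hodd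
    have ht2 : 1 ≤ t := by omega
    have hp' : p = 2 * t + 1 := by omega
    subst hp'
    exact hwheel t ht2 (wheel_embed G hp5 v hinj hcyc w hw hall)
  -- maximality of `q`
  have hmax : ∀ i : ℕ, i ≤ p → HasConsecutiveNbrs G v w i → i ≤ qval G v w :=
    fun i h1 h2 => le_csSup hbdd ⟨h1, h2⟩
  have hnot : ¬ HasConsecutiveNbrs G v w (qval G v w + 1) := by
    intro h
    have := hmax _ (by omega) h
    omega
  have hL : ¬ G.Adj w (v (j - 1)) := by
    intro hadj
    apply hnot
    refine ⟨j - 1, fun k hk => ?_⟩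
    match k with
    | 0 => simpa using hadj
    | (m + 1) =>
      have h' := hj m (by omega)
      have hcast : j - 1 + ((m + 1 : ℕ) : ZMod p) = j + (m : ZMod p) := by
        push_cast; ring
      rwa [hcast]
  have hR : ¬ G.Adj w (v (j + (qval G v w : ZMod p))) := by
    intro hadj
    apply hnot
    refine ⟨j, fun k hk => ?_⟩
    rcases Nat.lt_or_ge k (qval G v w) with h' | h'
    · exact hj k h'
    · have hk' : k = qval G v w := by omega
      rw [hk']; exact hadj
  have A0 : G.Adj w (v j) := by simpa using hj 0 (by omega)
  -- `q ≠ 2`, else there is a bull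
  have hq2 : qval G v w ≠ 2 := by
    intro h2
    have A1 : G.Adj w (v (j + 1)) := by simpa using hj 1 (by omega)
    have hR' : ¬ G.Adj w (v (j + 2)) := by
      rw [h2] at hR
      simpa using hR
    exact hbull (bull_embed G (v (j - 1)) (v j) w (v (j + 1)) (v (j + 2))
      ((hcyc (j - 1) j).2 (Or.inl (by ring)))
      A0.symm A1
      ((hcyc (j + 1) (j + 2)).2 (Or.inl (by ring)))
      ((hcyc j (j + 1)).2 (Or.inl rfl))
      (fun h => hL h.symm)
      (nadj (j - 1) (j + 1)
        (idx (j + 1) (j - 1 + 1) 1 (by omega) (by omega) (by push_cast; ring))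
        ((idx (j + 1 + 1) (j - 1) 3 (by omega) (by omega) (by push_cast; ring)).symm))
      (nadj (j - 1) (j + 2)
        (idx (j + 2) (j - 1 + 1) 2 (by omega) (by omega) (by push_cast; ring))
        ((idx (j + 2 + 1) (j - 1) 4 (by omega) (by omega) (by push_cast; ring)).symm))
      (nadj j (j + 2)
        (idx (j + 2) (j + 1) 1 (by omega) (by omega) (by push_cast; ring))
        ((idx (j + 2 + 1) j 3 (by omega) (by omega) (by push_cast; ring)).symm))
      hR'
      (hwv (j - 1)).symm
      (vne (j - 1) (j + 1) 2 (by omega) (by omega) (by push_cast; ring))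
      (vne (j - 1) (j + 2) 3 (by omega) (by omega) (by push_cast; ring))
      (vne j (j + 2) 2 (by omega) (by omega) (by push_cast; ring))
      (hwv (j + 2)))
  constructor
  · intro hp6
    -- if `q ≥ 4` (and `q < p`, `p > 5`) there is a bull
    have hq4 : qval G v w < 4 := by
      by_contra h4
      push_neg at h4
      have A1 : G.Adj w (v (j + 1)) := by simpa using hj 1 (by omega)
      have A3 : G.Adj w (v (j + 3)) := by simpa using hj 3 (by omega)
      exact hbull (bull_embed G (v (j - 1)) (v j) (v (j + 1)) w (v (j + 3))
        ((hcyc (j - 1) j).2 (Or.inl (by ring)))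
        ((hcyc j (j + 1)).2 (Or.inl rfl))
        A1.symm A3
        A0.symm
        (nadj (j - 1) (j + 1)
          (idx (j + 1) (j - 1 + 1) 1 (by omega) (by omega) (by push_cast; ring))
          ((idx (j + 1 + 1) (j - 1) 3 (by omega) (by omega) (by push_cast; ring)).symm))
        (fun h => hL h.symm)
        (nadj (j - 1) (j + 3)
          (idx (j + 3) (j - 1 + 1) 3 (by omega) (by omega) (by push_cast; ring))
          ((idx (j + 3 + 1) (j - 1) 5 (by omega) (by omega) (by push_cast; ring)).symm))
        (nadj j (j + 3)
          (idx (j + 3) (j + 1) 2 (by omega) (by omega) (by push_cast; ring))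
          ((idx (j + 3 + 1) j 4 (by omega) (by omega) (by push_cast; ring)).symm))
        (nadj (j + 1) (j + 3)
          (idx (j + 3) (j + 1 + 1) 1 (by omega) (by omega) (by push_cast; ring))
          ((idx (j + 3 + 1) (j + 1) 3 (by omega) (by omega) (by push_cast; ring)).symm))
        (vne (j - 1) (j + 1) 2 (by omega) (by omega) (by push_cast; ring))
        (hwv (j - 1)).symm
        (vne (j - 1) (j + 3) 4 (by omega) (by omega) (by push_cast; ring))
        (vne j (j + 3) 3 (by omega) (by omega) (by push_cast; ring))
        (vne (j + 1) (j + 3) 2 (by omega) (by omega) (by push_cast; ring)))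
    simp only [Set.mem_insert_iff, Set.mem_singleton_iff]
    omega
  · intro hpe
    simp only [Set.mem_insert_iff, Set.mem_singleton_iff]
    omega
end

section
/- Let G be a bull-free graph, let Q = v_1 v_2 ... v_p v_1 be a smallest induced odd cycle in G of length p ≥ 5, and let w ∈ V(G)∖V(Q). If q(w) = 3, then d_Q(w) = 3, i.e. the neighbourhood of w on Q consists exactly of three consecutive vertices of Q. -/
instance : DecidableRel bull.Adj := fun a b => by
  rw [bull]
  exact decidable_of_iff _ (SimpleGraph.fromRel_adj _ a b).symm

lemma contains_bull {V : Type*} (G : SimpleGraph V) (x0 x1 x2 x3 x4 : V)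
    (d02 : x0 ≠ x2) (d03 : x0 ≠ x3) (d04 : x0 ≠ x4) (d14 : x1 ≠ x4) (d24 : x2 ≠ x4)
    (h01 : G.Adj x0 x1) (h12 : G.Adj x1 x2) (h23 : G.Adj x2 x3) (h34 : G.Adj x3 x4)
    (h13 : G.Adj x1 x3)
    (n02 : ¬ G.Adj x0 x2) (n03 : ¬ G.Adj x0 x3) (n04 : ¬ G.Adj x0 x4)
    (n14 : ¬ G.Adj x1 x4) (n24 : ¬ G.Adj x2 x4) :
    ContainsInduced bull G := by
  have d01 := h01.ne
  have d12 := h12.ne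
  have d23 := h23.ne
  have d34 := h34.ne
  have d13 := h13.ne
  refine ⟨⟨![x0, x1, x2, x3, x4], ?_⟩, ?_⟩
  · intro a b hab
    fin_cases a <;> fin_cases b <;>
      simp_all [Matrix.cons_val_zero, Matrix.cons_val_one, Matrix.head_cons,
        Matrix.cons_val_succ]
  · intro a b
    fin_cases a <;> fin_cases b <;>
      simp only [Function.Embedding.coeFn_mk, Matrix.cons_val_zero, Matrix.cons_val_one,
        Matrix.head_cons, Matrix.cons_val_succ] <;>
      first
        | exact iff_of_true (by assumption) (by decide)
        | exact iff_of_true (G.adj_symm (by assumption)) (by decide)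
        | exact iff_of_false (by assumption) (by decide)
        | exact iff_of_false (fun h => absurd (G.adj_symm h) (by assumption)) (by decide)
        | exact iff_of_false (G.loopless.irrefl _) (by decide)

/-- Let `G` be a bull-free graph, let `Q` be a smallest induced odd cycle of `G` of
length `p ≥ 5`, and let `w ∉ Q`. If `q(w) = 3` then `d_Q(w) = 3`, i.e. the
neighbourhood of `w` on `Q` consists exactly of three consecutive vertices of `Q`. -/
theorem qval_three_imp_degree_three {V : Type*} [Fintype V] (G : SimpleGraph V)
    (hbull : ¬ ContainsInduced bull G)
    {p : ℕ} (v : ZMod p → V) (hQ : IsSmallestInducedOddCycle G v)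
    (w : V) (hw : w ∉ Set.range v) (hq : qval G v w = 3) :
    {j : ZMod p | G.Adj w (v j)}.ncard = 3 ∧
    ∃ i : ZMod p, {j : ZMod p | G.Adj w (v j)} = {i, i + 1, i + 2} := by
  obtain ⟨hp5, hpodd, ⟨hvinj, hadj⟩, -⟩ := hQ
  haveI : NeZero p := ⟨by omega⟩
  have key : ∀ d : ℕ, 0 < d → d ≤ 6 → d ≠ 5 → ((d : ZMod p) = 0) → False := by
    intro d hd hd6 hd5 h
    have hdvd : p ∣ d := (ZMod.natCast_eq_zero_iff d p).mp h
    have hle := Nat.le_of_dvd hd hdvd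
    have hodd := Nat.odd_iff.mp hpodd
    have hple : p ≤ 6 := le_trans hle hd6
    interval_cases p <;> omega
  have h1 : (1 : ZMod p) ≠ 0 := fun h => key 1 (by norm_num) (by norm_num) (by norm_num)
    (by exact_mod_cast h)
  have h2 : (2 : ZMod p) ≠ 0 := fun h => key 2 (by norm_num) (by norm_num) (by norm_num)
    (by exact_mod_cast h)
  have h3 : (3 : ZMod p) ≠ 0 := fun h => key 3 (by norm_num) (by norm_num) (by norm_num)
    (by exact_mod_cast h)
  have h4 : (4 : ZMod p) ≠ 0 := fun h => key 4 (by norm_num) (by norm_num) (by norm_num)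
    (by exact_mod_cast h)
  have h6 : (6 : ZMod p) ≠ 0 := fun h => key 6 (by norm_num) (by norm_num) (by norm_num)
    (by exact_mod_cast h)
  have hq' : sSup {i : ℕ | i ≤ p ∧ HasConsecutiveNbrs G v w i} = 3 := hq
  have hSne : Set.Nonempty {i : ℕ | i ≤ p ∧ HasConsecutiveNbrs G v w i} :=
    ⟨0, Nat.zero_le p, 0, fun k hk => absurd hk (by omega)⟩
  have hSbdd : BddAbove {i : ℕ | i ≤ p ∧ HasConsecutiveNbrs G v w i} :=
    ⟨p, fun i hi => hi.1⟩
  have h3mem : HasConsecutiveNbrs G v w 3 := by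
    have hm := Nat.sSup_mem hSne hSbdd
    rw [hq'] at hm
    exact hm.2
  have h4not : ¬ HasConsecutiveNbrs G v w 4 := fun hc => by
    have : (4 : ℕ) ≤ sSup {i : ℕ | i ≤ p ∧ HasConsecutiveNbrs G v w i} :=
      le_csSup hSbdd ⟨by omega, hc⟩
    omega
  obtain ⟨j, hj⟩ := h3mem
  have a0 : G.Adj w (v j) := by have := hj 0 (by norm_num); push_cast at this; simpa using this
  have a1 : G.Adj w (v (j + 1)) := by
    have := hj 1 (by norm_num); push_cast at this; exact this
  have a2 : G.Adj w (v (j + 2)) := by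
    have := hj 2 (by norm_num); push_cast at this; exact this
  have na : ¬ G.Adj w (v (j - 1)) := fun h => h4not ⟨j - 1, fun k hk => by
    interval_cases k
    · convert h using 2 <;> (push_cast; ring)
    · convert a0 using 2 <;> (push_cast; ring)
    · convert a1 using 2 <;> (push_cast; ring)
    · convert a2 using 2 <;> (push_cast; ring)⟩
  have nb : ¬ G.Adj w (v (j + 3)) := fun h => h4not ⟨j, fun k hk => by
    interval_cases k
    · convert a0 using 2 <;> (push_cast; ring)
    · convert a1 using 2 <;> (push_cast; ring)
    · convert a2 using 2 <;> (push_cast; ring)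
    · convert h using 2 <;> (push_cast; ring)⟩
  have nadj : ∀ a b : ZMod p, b ≠ a + 1 → a ≠ b + 1 → ¬ G.Adj (v a) (v b) := by
    intro a b hx hy h
    rcases (hadj a b).mp h with h' | h'
    · exact hx h'
    · exact hy h'
  have dv : ∀ a b : ZMod p, a ≠ b → v a ≠ v b := fun a b h hh => h (hvinj hh)
  have dw : ∀ a : ZMod p, w ≠ v a := fun a h => hw ⟨a, h.symm⟩
  have hNset : {m : ZMod p | G.Adj w (v m)} = {j, j + 1, j + 2} := by
    apply Set.eq_of_subset_of_subset
    · intro m hm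
      simp only [Set.mem_setOf_eq] at hm
      by_contra hmem
      simp only [Set.mem_insert_iff, Set.mem_singleton_iff] at hmem
      push_neg at hmem
      obtain ⟨m0, m1, m2⟩ := hmem
      have mj1 : m ≠ j - 1 := fun h => na (h ▸ hm)
      have mj3 : m ≠ j + 3 := fun h => nb (h ▸ hm)
      by_cases hm2 : m = j - 2
      · subst hm2
        have h5 : (5 : ZMod p) ≠ 0 := fun h => mj3 (by linear_combination -h)
        exact hbull (contains_bull G (v (j + 3)) (v (j + 2)) (v (j + 1)) w (v (j - 2))
          (dv _ _ (fun h => h2 (by linear_combination h)))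
          (dw _).symm
          (dv _ _ (fun h => h5 (by linear_combination h)))
          (dv _ _ (fun h => h4 (by linear_combination h)))
          (dv _ _ (fun h => h3 (by linear_combination h)))
          ((hadj (j + 2) (j + 3)).mpr (Or.inl (by ring))).symm
          ((hadj (j + 1) (j + 2)).mpr (Or.inl (by ring))).symm
          a1.symm hm a2.symm
          (nadj _ _ (fun h => h3 (by linear_combination -h)) (fun h => h1 (by linear_combination h)))
          (fun h => nb h.symm)
          (nadj _ _ (fun h => h6 (by linear_combination -h)) (fun h => h4 (by linear_combination h)))
          (nadj _ _ (fun h => h5 (by linear_combination -h)) (fun h => h3 (by linear_combination h)))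
          (nadj _ _ (fun h => h4 (by linear_combination -h)) (fun h => h2 (by linear_combination h))))
      · exact hbull (contains_bull G (v (j - 1)) (v j) (v (j + 1)) w (v m)
          (dv _ _ (fun h => h2 (by linear_combination -h)))
          (dw _).symm
          (dv _ _ (Ne.symm mj1))
          (dv _ _ (Ne.symm m0))
          (dv _ _ (Ne.symm m1))
          ((hadj (j - 1) j).mpr (Or.inl (by ring)))
          ((hadj j (j + 1)).mpr (Or.inl rfl))
          a1.symm hm a0.symm
          (nadj _ _ (fun h => h1 (by linear_combination h)) (fun h => h3 (by linear_combination -h)))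
          (fun h => na h.symm)
          (nadj _ _ (fun h => m0 (by linear_combination h)) (fun h => hm2 (by linear_combination -h)))
          (nadj _ _ m1 (fun h => mj1 (by linear_combination -h)))
          (nadj _ _ (fun h => m2 (by linear_combination h)) (fun h => m0 (by linear_combination -h))))
    · intro m hm
      simp only [Set.mem_insert_iff, Set.mem_singleton_iff] at hm
      rcases hm with rfl | rfl | rfl
      · exact a0
      · exact a1
      · exact a2
  refine ⟨?_, j, hNset⟩
  rw [hNset, Set.ncard_eq_three]
  exact ⟨j, j + 1, j + 2, fun h => h1 (by linear_combination -h),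
    fun h => h2 (by linear_combination -h), fun h => h1 (by linear_combination -h), rfl⟩
end

section
/- Let G be a graph, let Q = v_1 v_2 ... v_p v_1 be a smallest induced odd cycle in G of length p ≥ 5, and let w ∈ V(G)∖V(Q) with q(w) = 1. Then d_Q(w) ∈ {1, 2}; moreover, if d_Q(w) = 2, then there is an index i such that N_Q(w) = {v_i, v_{i+2}}. -/
/-! The neighbours of `w` cut `Q` into gaps whose lengths add up to the odd number `p`, so some
gap is odd. As `q(w) = 1`, an odd gap has length `g ≥ 3`. If `g < p`, the gap together with `w`
is an induced odd cycle of length `g + 2`, so minimality of `Q` forces `g + 2 = p`; the vertex in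
the remaining short gap cannot be a neighbour either, since it lies next to both ends. -/

theorem Nat.exists_odd_gap (P : ℕ → Prop) (h0 : P 0) {n : ℕ} (hn : Odd n) (hPn : P n) :
    ∃ s g, Odd g ∧ s + g ≤ n ∧ P s ∧ P (s + g) ∧ ∀ t, s < t → t < s + g → ¬ P t := by
  classical
  induction n using Nat.strong_induction_on with
  | _ n ih =>
  set s := Nat.findGreatest P (n - 1)
  have hsn : s < n := by have := Nat.findGreatest_le (P := P) (n - 1); have := hn.pos; omega
  have hs : P s := Nat.findGreatest_spec (Nat.zero_le _) h0
  have hmax : ∀ t, s < t → t < n → ¬ P t := fun t hst htn =>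
    Nat.findGreatest_is_greatest hst (by omega)
  by_cases hgap : Odd (n - s)
  · refine ⟨s, n - s, hgap, by omega, hs, ?_, fun t hst htn => hmax t hst (by omega)⟩
    rwa [Nat.add_sub_cancel' hsn.le]
  · have hs_odd : Odd s := by
      obtain ⟨m, rfl⟩ := hn
      obtain ⟨r, hr⟩ := Nat.not_odd_iff_even.mp hgap
      exact ⟨m - r, by omega⟩
    obtain ⟨s', g, hg, hle, hs', hsg, hmid⟩ := ih s hsn hs_odd hs
    exact ⟨s', g, hg, by omega, hs', hsg, hmid⟩

theorem ZMod.eq_add_one_iff_val {k : ℕ} [NeZero k] {i j : ZMod k} :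
    j = i + 1 ↔ j.val = i.val + 1 ∨ (j.val = 0 ∧ i.val + 1 = k) := by
  have hi := i.val_lt
  have hj := j.val_lt
  have hcast : i + 1 = ((i.val + 1 : ℕ) : ZMod k) := by push_cast [ZMod.natCast_zmod_val]; rfl
  rw [hcast, ← (ZMod.val_injective k).eq_iff, ZMod.val_natCast]
  rcases Nat.lt_or_ge (i.val + 1) k with hlt | hge
  · rw [Nat.mod_eq_of_lt hlt]; omega
  · rw [show i.val + 1 = k by omega, Nat.mod_self]; omega

theorem ZMod.exists_lt_eq_add_natCast {p : ℕ} [NeZero p] (b j : ZMod p) :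
    ∃ t < p, j = b + (t : ZMod p) :=
  ⟨(j - b).val, ZMod.val_lt _, by rw [ZMod.natCast_zmod_val]; ring⟩

theorem ZMod.natCast_inj_of_lt {p a c : ℕ} (ha : a < p) (hc : c < p) :
    (a : ZMod p) = c ↔ a = c := by
  rw [ZMod.natCast_eq_natCast_iff', Nat.mod_eq_of_lt ha, Nat.mod_eq_of_lt hc]

section InducedCycle

variable {V : Type*} {G : SimpleGraph V}

theorem isInducedCycle_of_nat {k : ℕ} [NeZero k] (f : ℕ → V)
    (hinj : ∀ a < k, ∀ c < k, f a = f c → a = c)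
    (hadj : ∀ a < k, ∀ c < k, G.Adj (f a) (f c) ↔
      (c = a + 1 ∨ (c = 0 ∧ a + 1 = k)) ∨ (a = c + 1 ∨ (a = 0 ∧ c + 1 = k))) :
    IsInducedCycle G (fun i : ZMod k => f i.val) :=
  ⟨fun i j h => ZMod.val_injective k (hinj _ i.val_lt _ j.val_lt h), fun i j => by
    rw [hadj _ i.val_lt _ j.val_lt, ZMod.eq_add_one_iff_val, ZMod.eq_add_one_iff_val]⟩

variable {p : ℕ} {v : ZMod p → V}

theorem IsInducedCycle.adj_add_natCast_iff (hv : IsInducedCycle G v) (b : ZMod p) {a c : ℕ}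
    (ha : a + 1 < p) (hc : c + 1 < p) :
    G.Adj (v (b + a)) (v (b + c)) ↔ c = a + 1 ∨ a = c + 1 := by
  rw [hv.2, add_assoc, add_assoc, add_right_inj, add_right_inj, ← Nat.cast_add_one,
    ← Nat.cast_add_one, ZMod.natCast_inj_of_lt (by omega) ha,
    ZMod.natCast_inj_of_lt (by omega) hc]

theorem IsInducedCycle.isInducedCycle_gap (hv : IsInducedCycle G v) {w : V}
    (hw : w ∉ Set.range v) {b : ZMod p} {g : ℕ} (hgp : g + 2 ≤ p)
    (hb : G.Adj w (v b)) (hbg : G.Adj w (v (b + g)))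
    (hgap : ∀ t, 0 < t → t < g → ¬ G.Adj w (v (b + t))) :
    IsInducedCycle G (fun i : ZMod (g + 2) => if i.val ≤ g then v (b + i.val) else w) := by
  have hw_arc : ∀ a ≤ g, G.Adj w (v (b + a)) ↔ a = 0 ∨ a = g := by
    intro a ha
    refine ⟨fun h => ?_, ?_⟩
    · by_contra hne
      exact hgap a (by omega) (by omega) h
    · rintro (rfl | rfl)
      · simpa using hb
      · exact hbg
  apply isInducedCycle_of_nat (fun t => if t ≤ g then v (b + t) else w)
  · intro a ha c hc h
    by_cases hag : a ≤ g <;> by_cases hcg : c ≤ g <;> simp only [hag, hcg, if_true, if_false] at h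
    · exact (ZMod.natCast_inj_of_lt (by omega) (by omega)).mp (add_left_cancel (hv.1 h))
    · exact absurd ⟨_, h⟩ hw
    · exact absurd ⟨_, h.symm⟩ hw
    · omega
  · intro a ha c hc
    by_cases hag : a ≤ g <;> by_cases hcg : c ≤ g <;> simp only [hag, hcg, if_true, if_false]
    · rw [hv.adj_add_natCast_iff b (by omega) (by omega)]
      omega
    · rw [G.adj_comm, hw_arc a hag]
      omega
    · rw [hw_arc c hcg]
      omega
    · simp only [SimpleGraph.irrefl, false_iff]
      omega

end InducedCycle

section Neighbours

variable {V : Type*} {G : SimpleGraph V} {p : ℕ} {v : ZMod p → V} {w : V}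

theorem le_qval {i : ℕ} (hi : i ≤ p) (h : HasConsecutiveNbrs G v w i) : i ≤ qval G v w :=
  le_csSup ⟨p, fun _ hj => hj.1⟩ ⟨hi, h⟩

theorem hasConsecutiveNbrs_qval : HasConsecutiveNbrs G v w (qval G v w) :=
  (Nat.sSup_mem (s := {i | i ≤ p ∧ HasConsecutiveNbrs G v w i})
    ⟨0, Nat.zero_le p, 0, fun _ hk => absurd hk (Nat.not_lt_zero _)⟩ ⟨p, fun _ hj => hj.1⟩).2

theorem exists_adj_of_qval_eq_one (hq : qval G v w = 1) : ∃ a, G.Adj w (v a) := by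
  obtain ⟨a, ha⟩ := hq ▸ (hasConsecutiveNbrs_qval (G := G) (v := v) (w := w))
  exact ⟨a, by simpa using ha 0 one_pos⟩

theorem not_adj_add_one_of_qval_eq_one (hp : 2 ≤ p) (hq : qval G v w = 1) {j : ZMod p}
    (hj : G.Adj w (v j)) : ¬ G.Adj w (v (j + 1)) := by
  intro hj1
  have : 2 ≤ qval G v w := le_qval hp ⟨j, fun k hk => by
    interval_cases k
    · simpa using hj
    · simpa using hj1⟩
  omega

theorem IsSmallestInducedOddCycle.gap_add_two_eq (hQ : IsSmallestInducedOddCycle G v)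
    (hw : w ∉ Set.range v) {b : ZMod p} {g : ℕ} (hg : Odd g) (hg3 : 3 ≤ g) (hgp : g < p)
    (hb : G.Adj w (v b)) (hbg : G.Adj w (v (b + g)))
    (hgap : ∀ t, 0 < t → t < g → ¬ G.Adj w (v (b + t))) : g + 2 = p := by
  obtain ⟨-, hp, hv, hmin⟩ := hQ
  have hle : g + 2 ≤ p := by
    obtain ⟨m, rfl⟩ := hg
    obtain ⟨r, rfl⟩ := hp
    omega
  by_contra hne
  exact hmin (g + 2) (by omega) (by omega) (hg.add_even even_two) _
    (hv.isInducedCycle_gap hw hle hb hbg hgap)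

theorem exists_odd_gap_of_qval_eq_one (hp : Odd p) (hp2 : 2 ≤ p) (hq : qval G v w = 1) :
    ∃ (b : ZMod p) (g : ℕ), Odd g ∧ 3 ≤ g ∧ g ≤ p ∧ G.Adj w (v b) ∧ G.Adj w (v (b + g)) ∧
      ∀ t : ℕ, 0 < t → t < g → ¬ G.Adj w (v (b + t)) := by
  obtain ⟨a, ha⟩ := exists_adj_of_qval_eq_one hq
  obtain ⟨s, g, hg, hle, hs, hsg, hmid⟩ :=
    Nat.exists_odd_gap (fun t => G.Adj w (v (a + t))) (by simpa using ha) hp (by simpa using ha)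
  have hbg : G.Adj w (v (a + s + g)) := by simpa [add_assoc] using hsg
  refine ⟨a + s, g, hg, ?_, by omega, hs, hbg, fun t h0 htg => ?_⟩
  · obtain ⟨m, rfl⟩ := hg
    rcases m with _ | m
    · exact absurd (by simpa using hbg) (not_adj_add_one_of_qval_eq_one hp2 hq hs)
    · omega
  · simpa [add_assoc] using hmid (s + t) (by omega) (by omega)

theorem IsSmallestInducedOddCycle.exists_eq_singleton_or_eq_pair_of_qval_eq_one
    (hQ : IsSmallestInducedOddCycle G v) (hw : w ∉ Set.range v) (hq : qval G v w = 1) :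
    ∃ i, {j | G.Adj w (v j)} = {i} ∨ {j | G.Adj w (v j)} = {i, i + 2} := by
  have hp5 := hQ.1
  have : NeZero p := ⟨by omega⟩
  obtain ⟨b, g, hg, hg3, hgp, hb, hbg, hgap⟩ :=
    exists_odd_gap_of_qval_eq_one hQ.2.1 (by omega) hq
  have hfar : ∀ t : ℕ, G.Adj w (v (b + t)) → t = 0 ∨ g ≤ t := fun t ht => by
    by_contra! h
    exact hgap t (by omega) h.2 ht
  rcases hgp.eq_or_lt with rfl | hgp
  · refine ⟨b, Or.inl <| Set.eq_singleton_iff_unique_mem.mpr ⟨hb, fun j hj => ?_⟩⟩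
    obtain ⟨t, ht, rfl⟩ := ZMod.exists_lt_eq_add_natCast b j
    obtain rfl : t = 0 := by have := hfar t hj; omega
    simp
  have hp := hQ.gap_add_two_eq hw hg hg3 hgp hb hbg hgap
  have hwrap : b + g + 2 = b := by
    have : ((g + 2 : ℕ) : ZMod p) = 0 := by rw [hp, ZMod.natCast_self]
    push_cast at this
    linear_combination this
  refine ⟨b + g, Or.inr <| Set.ext fun j => ⟨fun hj => ?_, ?_⟩⟩
  · obtain ⟨t, ht, rfl⟩ := ZMod.exists_lt_eq_add_natCast b j
    rcases hfar t hj with rfl | hgt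
    · exact Or.inr (by simpa using hwrap.symm)
    obtain rfl | rfl : t = g ∨ t = g + 1 := by omega
    · exact Or.inl rfl
    · refine absurd ?_ (not_adj_add_one_of_qval_eq_one (by omega) hq hj)
      rwa [Nat.cast_add_one, ← add_assoc, add_assoc, one_add_one_eq_two, hwrap]
  · rintro (rfl | rfl)
    · exact hbg
    · rwa [hwrap]

end Neighbours

theorem qval_one_degree_general {V : Type*} (G : SimpleGraph V)
    {p : ℕ} (v : ZMod p → V) (hQ : IsSmallestInducedOddCycle G v)
    (w : V) (hw : w ∉ Set.range v) (hq : qval G v w = 1) :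
    ({j : ZMod p | G.Adj w (v j)}.ncard = 1 ∨ {j : ZMod p | G.Adj w (v j)}.ncard = 2) ∧
    ({j : ZMod p | G.Adj w (v j)}.ncard = 2 →
      ∃ i : ZMod p, {j : ZMod p | G.Adj w (v j)} = {i, i + 2}) := by
  obtain ⟨i, hN | hN⟩ := hQ.exists_eq_singleton_or_eq_pair_of_qval_eq_one hw hq <;> rw [hN]
  · simp
  · have hi : i ≠ i + 2 := by
      intro h
      have h2 : ((2 : ℕ) : ZMod p) = 0 := by simpa using h
      have := Nat.le_of_dvd two_pos ((ZMod.natCast_eq_zero_iff 2 p).mp h2)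
      linarith [hQ.1]
    rw [Set.ncard_pair hi]
    exact ⟨Or.inr rfl, fun _ => ⟨i, rfl⟩⟩

/-- Let `G` be a graph, let `Q` be a smallest induced odd cycle of `G` of length
`p ≥ 5`, and let `w ∉ Q` with `q(w) = 1`. Then `d_Q(w) ∈ {1, 2}`; moreover if
`d_Q(w) = 2` then `N_Q(w) = {v_i, v_{i+2}}` for some index `i`. -/
theorem qval_one_degree {V : Type*} [Fintype V] (G : SimpleGraph V)
    {p : ℕ} (v : ZMod p → V) (hQ : IsSmallestInducedOddCycle G v)
    (w : V) (hw : w ∉ Set.range v) (hq : qval G v w = 1) :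
    ({j : ZMod p | G.Adj w (v j)}.ncard = 1 ∨ {j : ZMod p | G.Adj w (v j)}.ncard = 2) ∧
    ({j : ZMod p | G.Adj w (v j)}.ncard = 2 →
      ∃ i : ZMod p, {j : ZMod p | G.Adj w (v j)} = {i, i + 2}) :=
  qval_one_degree_general G v hQ w hw hq
end
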